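/- Let X be a standard normal real random variable. For every λ > 0 and every a ≥ 0, E[|X| · min(λ|X|, a)] = λ · erf(a/(√2 · λ)). -/

import Mathlib

open MeasureTheory ProbabilityTheory Classical

/-- Gauss error function `erf t = (2/√π) ∫₀ᵗ e^{−s²} ds`. -/
noncomputable def erf (t : ℝ) : ℝ := (2 / Real.sqrt Real.pi) * ∫ s in (0:ℝ)..t, Real.exp (-(s^2))

/-- `q(t) = √(2/π)·e^{−t²/2}/t + erf(t/√2) − 1`. -/
noncomputable def qfun (t : ℝ) : ℝ :=
  Real.sqrt (2 / Real.pi) * Real.exp (-(t^2)/2) / t + erf (t / Real.sqrt 2) - 1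

/-- Euclidean inner product on `Fin n → ℝ`. -/
def dot {n : ℕ} (x y : Fin n → ℝ) : ℝ := ∑ i, x i * y i

/-- Euclidean norm on `Fin n → ℝ`. -/
noncomputable def nrm {n : ℕ} (x : Fin n → ℝ) : ℝ := Real.sqrt (∑ i, (x i)^2)

/-- Standard Gaussian measure on `Fin n → ℝ` (i.i.d. `N(0,1)` coordinates). -/
noncomputable def stdGaussian (n : ℕ) : Measure (Fin n → ℝ) :=
  Measure.pi fun _ => gaussianReal 0 1

/-!
The integrand is even, so only `x > 0` matters; put `b = a / λ` there. Below `b` the integrand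
is `λ x² e^{-x²/2}`, and integrating by parts turns its integral into
`λ ∫₀ᵇ e^{-x²/2} - λ b e^{-b²/2}`; above `b` it is `a x e^{-x²/2}`, whose integral is
`a e^{-b²/2} = λ b e^{-b²/2}`. The boundary terms cancel, leaving
`E[|X| min(λ|X|, a)] = 2 λ (2π)^{-1/2} ∫₀ᵇ e^{-x²/2} dx = λ erf (b / √2)`.
-/

open Real Set Filter

lemma hasDerivAt_exp_neg_sq_div_two (x : ℝ) :
    HasDerivAt (fun y : ℝ => exp (-y ^ 2 / 2)) (-x * exp (-x ^ 2 / 2)) x := by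
  have h : HasDerivAt (fun y : ℝ => -y ^ 2 / 2) (-x) x :=
    ((hasDerivAt_pow 2 x).neg.div_const 2).congr_deriv (by ring)
  simpa [mul_comm] using h.exp

lemma integrable_mul_exp_neg_sq_div_two : Integrable (fun x : ℝ => x * exp (-x ^ 2 / 2)) := by
  convert integrable_mul_exp_neg_mul_sq (b := 1 / 2) (by norm_num) using 4
  ring

lemma integral_Ioi_mul_exp_neg_sq_div_two (b : ℝ) :
    ∫ x in Ioi b, x * exp (-x ^ 2 / 2) = exp (-b ^ 2 / 2) := by
  have hderiv : ∀ x ∈ Ici b,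
      HasDerivAt (fun y : ℝ => -exp (-y ^ 2 / 2)) (x * exp (-x ^ 2 / 2)) x := fun x _ =>
    (hasDerivAt_exp_neg_sq_div_two x).neg.congr_deriv (by ring)
  have hlim : Tendsto (fun x : ℝ => -exp (-x ^ 2 / 2)) atTop (nhds (-0)) := by
    have h : Tendsto (fun x : ℝ => -(x ^ 2 / 2)) atTop atBot :=
      tendsto_neg_atTop_atBot.comp ((tendsto_pow_atTop two_ne_zero).atTop_div_const two_pos)
    simpa only [neg_div, Function.comp_def] using (tendsto_exp_atBot.comp h).neg
  rw [integral_Ioi_of_hasDerivAt_of_tendsto' hderiv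
    integrable_mul_exp_neg_sq_div_two.integrableOn hlim]
  ring

lemma integral_sq_mul_exp_neg_sq_div_two (b : ℝ) :
    ∫ x in (0:ℝ)..b, x ^ 2 * exp (-x ^ 2 / 2)
      = (∫ x in (0:ℝ)..b, exp (-x ^ 2 / 2)) - b * exp (-b ^ 2 / 2) := by
  have hderiv : ∀ x ∈ uIcc (0:ℝ) b, HasDerivAt (fun y : ℝ => -(y * exp (-y ^ 2 / 2)))
      (x ^ 2 * exp (-x ^ 2 / 2) - exp (-x ^ 2 / 2)) x := fun x _ =>
    ((hasDerivAt_id x).mul (hasDerivAt_exp_neg_sq_div_two x)).neg.congr_deriv (by rw [id]; ring)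
  have hsq : IntervalIntegrable (fun x : ℝ => x ^ 2 * exp (-x ^ 2 / 2)) volume 0 b :=
    (by fun_prop : Continuous fun x : ℝ => x ^ 2 * exp (-x ^ 2 / 2)).intervalIntegrable 0 b
  have hexp : IntervalIntegrable (fun x : ℝ => exp (-x ^ 2 / 2)) volume 0 b :=
    (by fun_prop : Continuous fun x : ℝ => exp (-x ^ 2 / 2)).intervalIntegrable 0 b
  have hftc := intervalIntegral.integral_eq_sub_of_hasDerivAt hderiv (hsq.sub hexp)
  rw [intervalIntegral.integral_sub hsq hexp] at hftc
  simp only [zero_mul, neg_zero, sub_zero] at hftc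
  linarith

lemma integral_exp_neg_sq_div_two_eq_erf (b : ℝ) :
    ∫ x in (0:ℝ)..b, exp (-x ^ 2 / 2) = √2 * (√π / 2) * erf (b / √2) := by
  have hsqrt2 : √2 ≠ 0 := by positivity
  have hrescale : ∀ x : ℝ, exp (-x ^ 2 / 2) = exp (-(x / √2) ^ 2) := fun x => by
    rw [div_pow, sq_sqrt zero_le_two]; ring_nf
  simp_rw [hrescale]
  rw [intervalIntegral.integral_comp_div (fun s => exp (-s ^ 2)) hsqrt2, zero_div, erf,
    smul_eq_mul]
  field_simp

lemma integral_Ioi_mul_min_mul_exp_neg_sq_div_two {lam a : ℝ} (hlam : 0 < lam) (ha : 0 ≤ a) :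
    ∫ x in Ioi 0, x * min (lam * x) a * exp (-x ^ 2 / 2)
      = lam * ∫ x in (0:ℝ)..a / lam, exp (-x ^ 2 / 2) := by
  set b := a / lam
  have hb : 0 ≤ b := div_nonneg ha hlam.le
  have hab : lam * b = a := mul_div_cancel₀ a hlam.ne'
  have hbelow : EqOn (fun x => x * min (lam * x) a * exp (-x ^ 2 / 2))
      (fun x => lam * (x ^ 2 * exp (-x ^ 2 / 2))) (Ioc 0 b) := fun x hx => by
    dsimp only
    rw [min_eq_left (hab ▸ mul_le_mul_of_nonneg_left hx.2 hlam.le)]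
    ring
  have habove : EqOn (fun x => x * min (lam * x) a * exp (-x ^ 2 / 2))
      (fun x => a * (x * exp (-x ^ 2 / 2))) (Ioi b) := fun x hx => by
    dsimp only
    rw [min_eq_right (hab ▸ mul_le_mul_of_nonneg_left (le_of_lt hx) hlam.le)]
    ring
  have hint_below : IntegrableOn (fun x => x * min (lam * x) a * exp (-x ^ 2 / 2)) (Ioc 0 b) :=
    (by fun_prop : Continuous fun x => x * min (lam * x) a * exp (-x ^ 2 / 2)).integrableOn_Ioc
  have hint_above : IntegrableOn (fun x => x * min (lam * x) a * exp (-x ^ 2 / 2)) (Ioi b) :=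
    (integrable_mul_exp_neg_sq_div_two.const_mul a).integrableOn.congr_fun habove.symm
      measurableSet_Ioi
  rw [← Ioc_union_Ioi_eq_Ioi hb,
    setIntegral_union (Ioc_disjoint_Ioi le_rfl) measurableSet_Ioi hint_below hint_above,
    setIntegral_congr_fun measurableSet_Ioc hbelow, setIntegral_congr_fun measurableSet_Ioi habove,
    integral_const_mul, integral_const_mul, ← intervalIntegral.integral_of_le hb,
    integral_sq_mul_exp_neg_sq_div_two, integral_Ioi_mul_exp_neg_sq_div_two, ← hab]
  ring

theorem stmt0 (lam a : ℝ) (hlam : 0 < lam) (ha : 0 ≤ a) :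
    (∫ x, |x| * min (lam * |x|) a ∂(gaussianReal 0 1))
      = lam * erf (a / (Real.sqrt 2 * lam)) := by
  have hpdf (x : ℝ) : gaussianPDFReal 0 1 x = (√2 * √π)⁻¹ * exp (-x ^ 2 / 2) := by
    simp [gaussianPDFReal, sqrt_mul zero_le_two]
  calc ∫ x, |x| * min (lam * |x|) a ∂(gaussianReal 0 1)
      = (√2 * √π)⁻¹ * ∫ x, |x| * min (lam * |x|) a * exp (-|x| ^ 2 / 2) := by
        rw [integral_gaussianReal_eq_integral_smul one_ne_zero, ← integral_const_mul]
        congr 1 with x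
        rw [hpdf, sq_abs, smul_eq_mul]
        ring
    _ = (√2 * √π)⁻¹ * (2 * ∫ x in Ioi 0, x * min (lam * x) a * exp (-x ^ 2 / 2)) := by
        rw [integral_comp_abs (f := fun x => x * min (lam * x) a * exp (-x ^ 2 / 2))]
    _ = lam * erf (a / (√2 * lam)) := by
        rw [integral_Ioi_mul_min_mul_exp_neg_sq_div_two hlam ha,
          integral_exp_neg_sq_div_two_eq_erf, div_div, mul_comm lam]
        field_simp
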